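/- For the operations on planar binary trees defined recursively by s ⊣ t := s^l ∨ (s^r + t) and s ⊢ t := (s + t^l) ∨ t^r, extended to finite sets of trees (with s + t := (s ⊣ t) ∪ (s ⊢ t), and | acting as the unit: s ⊣ | = s, | ⊢ t = t), the relation (r ⊣ s) ⊣ t = r ⊣ (s + t) holds for all nonempty sets of nontrivial trees r, s, t. -/

import Mathlib

/-- Planar binary rooted trees: either the trivial tree `leaf` (drawn `|`)
or the grafting `node l r = l ∨ r` of two trees. -/
inductive PBT : Type
  | leaf : PBT
  | node : PBT → PBT → PBT
deriving DecidableEq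

namespace PBT

/-- Number of internal vertices of a tree. -/
def size : PBT → ℕ
  | leaf => 0
  | node l r => l.size + r.size + 1

/-- The dendriform sum of two trees, a set of trees:
`s + t = (s ⊣ t) ∪ (s ⊢ t)` with `s ⊣ t = sˡ ∨ (sʳ + t)`, `s ⊢ t = (s + tˡ) ∨ tʳ`,
and the trivial tree acting as neutral element. -/
def addT : PBT → PBT → Set PBT
  | leaf, t => {t}
  | node l r, leaf => {node l r}
  | node l r, node l' r' =>
      (fun x => node l x) '' addT r (node l' r') ∪
      (fun x => node x r') '' addT (node l r) l'
termination_by s t => s.size + t.size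
decreasing_by all_goals (simp [size] <;> omega)

/-- The left operation `s ⊣ t := sˡ ∨ (sʳ + t)` on trees (with `s ⊣ | = s`),
valued in sets of trees. -/
def leftT : PBT → PBT → Set PBT
  | leaf, _ => ∅
  | node l r, leaf => {node l r}
  | node l r, node l' r' => (fun x => node l x) '' addT r (node l' r')

/-- The right operation `s ⊢ t := (s + tˡ) ∨ tʳ` on trees (with `| ⊢ t = t`),
valued in sets of trees. -/
def rightT : PBT → PBT → Set PBT
  | _, leaf => ∅
  | leaf, t => {t}
  | node l r, node l' r' => (fun x => node x r') '' addT (node l r) l'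

/-- Elementwise extension of `⊣` to sets of trees. -/
def leftS (S T : Set PBT) : Set PBT := ⋃ s ∈ S, ⋃ t ∈ T, leftT s t

/-- Elementwise extension of `⊢` to sets of trees. -/
def rightS (S T : Set PBT) : Set PBT := ⋃ s ∈ S, ⋃ t ∈ T, rightT s t

/-- Elementwise extension of the sum `+` to sets of trees:
`S + T = (S ⊣ T) ∪ (S ⊢ T)`. -/
def addS (S T : Set PBT) : Set PBT := ⋃ s ∈ S, ⋃ t ∈ T, addT s t

/-- A nonempty finite set of nontrivial trees. -/
def Good (S : Set PBT) : Prop := S.Nonempty ∧ S.Finite ∧ ∀ t ∈ S, t ≠ leaf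

end PBT

namespace PBT

lemma addT_leaf_left (t : PBT) : addT leaf t = {t} := by simp [addT]

lemma addT_leaf_right (s : PBT) : addT s leaf = {s} := by
  cases s <;> simp [addT]

lemma addT_node (l r l' r' : PBT) : addT (node l r) (node l' r') =
    (fun x => node l x) '' addT r (node l' r') ∪
    (fun x => node x r') '' addT (node l r) l' := by rw [addT]

lemma mem_addT_node {a b1 b2 z : PBT} (h : z ∈ addT a (node b1 b2)) :
    ∃ u v, z = node u v := by
  cases a with
  | leaf => rw [addT_leaf_left] at h; exact ⟨b1, b2, h⟩
  | node l r =>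
      rw [addT_node] at h
      rcases h with ⟨u, _, rfl⟩ | ⟨u, _, rfl⟩ <;> exact ⟨_, _, rfl⟩

theorem addT_assoc (a b c : PBT) :
    (⋃ x ∈ addT a b, addT x c) = ⋃ y ∈ addT b c, addT a y := by
  match a, b, c with
  | leaf, b, c => ext z; simp [addT_leaf_left]
  | node a1 a2, leaf, c => ext z; simp [addT_leaf_left, addT_leaf_right]
  | node a1 a2, node b1 b2, leaf => ext z; simp [addT_leaf_right]
  | node a1 a2, node b1 b2, node c1 c2 =>
      have ih1 := addT_assoc a2 (node b1 b2) (node c1 c2)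
      have ih2 := addT_assoc (node a1 a2) (node b1 b2) c1
      ext z
      simp only [Set.mem_iUnion, exists_prop]
      constructor
      · rintro ⟨x, hx, hz⟩
        rw [addT_node] at hx
        rcases hx with ⟨u, hu, rfl⟩ | ⟨v, hv, rfl⟩
        · rw [addT_node] at hz
          rcases hz with ⟨w, hw, rfl⟩ | ⟨p, hp, rfl⟩
          · have h : w ∈ ⋃ x ∈ addT a2 (node b1 b2), addT x (node c1 c2) :=
              Set.mem_biUnion hu hw
            rw [ih1] at h
            simp only [Set.mem_iUnion, exists_prop] at h
            obtain ⟨y, hy, hw'⟩ := h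
            obtain ⟨y1, y2, rfl⟩ := mem_addT_node hy
            exact ⟨node y1 y2, hy, by rw [addT_node]; exact Or.inl ⟨w, hw', rfl⟩⟩
          · have h : p ∈ ⋃ x ∈ addT (node a1 a2) (node b1 b2), addT x c1 :=
              Set.mem_biUnion (by rw [addT_node]; exact Or.inl ⟨u, hu, rfl⟩) hp
            rw [ih2] at h
            simp only [Set.mem_iUnion, exists_prop] at h
            obtain ⟨y, hy, hp'⟩ := h
            exact ⟨node y c2, by rw [addT_node]; exact Or.inr ⟨y, hy, rfl⟩,
              by rw [addT_node]; exact Or.inr ⟨p, hp', rfl⟩⟩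
        · rw [addT_node] at hz
          rcases hz with ⟨w, hw, rfl⟩ | ⟨p, hp, rfl⟩
          · exact ⟨node b1 w, by rw [addT_node]; exact Or.inl ⟨w, hw, rfl⟩,
              by rw [addT_node]; exact Or.inr ⟨v, hv, rfl⟩⟩
          · have h : p ∈ ⋃ x ∈ addT (node a1 a2) (node b1 b2), addT x c1 :=
              Set.mem_biUnion (by rw [addT_node]; exact Or.inr ⟨v, hv, rfl⟩) hp
            rw [ih2] at h
            simp only [Set.mem_iUnion, exists_prop] at h
            obtain ⟨y, hy, hp'⟩ := h
            exact ⟨node y c2, by rw [addT_node]; exact Or.inr ⟨y, hy, rfl⟩,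
              by rw [addT_node]; exact Or.inr ⟨p, hp', rfl⟩⟩
      · rintro ⟨y, hy, hz⟩
        rw [addT_node] at hy
        rcases hy with ⟨w, hw, rfl⟩ | ⟨p, hp, rfl⟩
        · rw [addT_node] at hz
          rcases hz with ⟨m, hm, rfl⟩ | ⟨q, hq, rfl⟩
          · have h : m ∈ ⋃ y ∈ addT (node b1 b2) (node c1 c2), addT a2 y :=
              Set.mem_biUnion (by rw [addT_node]; exact Or.inl ⟨w, hw, rfl⟩) hm
            rw [← ih1] at h
            simp only [Set.mem_iUnion, exists_prop] at h
            obtain ⟨x, hx, hm'⟩ := h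
            obtain ⟨x1, x2, rfl⟩ := mem_addT_node hx
            exact ⟨node a1 (node x1 x2),
              by rw [addT_node]; exact Or.inl ⟨node x1 x2, hx, rfl⟩,
              by rw [addT_node]; exact Or.inl ⟨m, hm', rfl⟩⟩
          · exact ⟨node q b2, by rw [addT_node]; exact Or.inr ⟨q, hq, rfl⟩,
              by rw [addT_node]; exact Or.inl ⟨w, hw, rfl⟩⟩
        · rw [addT_node] at hz
          rcases hz with ⟨m, hm, rfl⟩ | ⟨q, hq, rfl⟩
          · have h : m ∈ ⋃ y ∈ addT (node b1 b2) (node c1 c2), addT a2 y :=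
              Set.mem_biUnion (by rw [addT_node]; exact Or.inr ⟨p, hp, rfl⟩) hm
            rw [← ih1] at h
            simp only [Set.mem_iUnion, exists_prop] at h
            obtain ⟨x, hx, hm'⟩ := h
            obtain ⟨x1, x2, rfl⟩ := mem_addT_node hx
            exact ⟨node a1 (node x1 x2),
              by rw [addT_node]; exact Or.inl ⟨node x1 x2, hx, rfl⟩,
              by rw [addT_node]; exact Or.inl ⟨m, hm', rfl⟩⟩
          · have h : q ∈ ⋃ y ∈ addT (node b1 b2) c1, addT (node a1 a2) y :=
              Set.mem_biUnion hp hq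
            rw [← ih2] at h
            simp only [Set.mem_iUnion, exists_prop] at h
            obtain ⟨x, hx, hq'⟩ := h
            obtain ⟨x1, x2, rfl⟩ := mem_addT_node hx
            exact ⟨node x1 x2, hx, by rw [addT_node]; exact Or.inr ⟨q, hq', rfl⟩⟩

end PBT

namespace PBT

lemma left_left_tree (a b c : PBT) :
    (⋃ x ∈ leftT a b, leftT x c) = ⋃ y ∈ addT b c, leftT a y := by
  cases a with
  | leaf => ext z; simp [leftT]
  | node a1 a2 =>
    cases b with
    | leaf => ext z; simp [leftT, addT_leaf_left]
    | node b1 b2 =>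
      cases c with
      | leaf =>
        ext z
        rw [addT_leaf_right]
        simp only [Set.mem_iUnion, exists_prop, Set.mem_singleton_iff,
          exists_eq_left]
        constructor
        · rintro ⟨x, hx, hz⟩
          simp only [leftT] at hx
          obtain ⟨u, hu, rfl⟩ := hx
          simp only [leftT, Set.mem_singleton_iff] at hz
          subst hz
          simp only [leftT]
          exact ⟨u, hu, rfl⟩
        · intro hz
          simp only [leftT] at hz ⊢
          obtain ⟨u, hu, rfl⟩ := hz
          exact ⟨node a1 u, ⟨u, hu, rfl⟩, by simp [leftT]⟩
      | node c1 c2 =>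
        ext z
        simp only [Set.mem_iUnion, exists_prop]
        constructor
        · rintro ⟨x, hx, hz⟩
          simp only [leftT] at hx
          obtain ⟨u, hu, rfl⟩ := hx
          simp only [leftT] at hz
          obtain ⟨w, hw, rfl⟩ := hz
          have h : w ∈ ⋃ x ∈ addT a2 (node b1 b2), addT x (node c1 c2) :=
            Set.mem_biUnion hu hw
          rw [addT_assoc] at h
          simp only [Set.mem_iUnion, exists_prop] at h
          obtain ⟨y, hy, hw'⟩ := h
          obtain ⟨y1, y2, rfl⟩ := mem_addT_node hy
          exact ⟨node y1 y2, hy, by simp only [leftT]; exact ⟨w, hw', rfl⟩⟩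
        · rintro ⟨y, hy, hz⟩
          obtain ⟨y1, y2, rfl⟩ := mem_addT_node hy
          simp only [leftT] at hz
          obtain ⟨m, hm, rfl⟩ := hz
          have h : m ∈ ⋃ y ∈ addT (node b1 b2) (node c1 c2), addT a2 y :=
            Set.mem_biUnion hy hm
          rw [← addT_assoc] at h
          simp only [Set.mem_iUnion, exists_prop] at h
          obtain ⟨x, hx, hm'⟩ := h
          exact ⟨node a1 x, by simp only [leftT]; exact ⟨x, hx, rfl⟩,
            by simp only [leftT]; exact ⟨m, hm', rfl⟩⟩

end PBT


open PBT in
/-- For the dendriform operations on (nonempty finite) sets of nontrivial planar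
binary trees, `(r ⊣ s) ⊣ t = r ⊣ (s + t)`. -/
theorem left_left_eq_left_add (r s t : Set PBT)
    (hr : PBT.Good r) (hs : PBT.Good s) (ht : PBT.Good t) :
    leftS (leftS r s) t = leftS r (addS s t) := by
  ext z
  simp only [leftS, addS, Set.mem_iUnion, exists_prop]
  constructor
  · rintro ⟨x, ⟨a, ha, b, hb, hx⟩, c, hc, hz⟩
    have h : z ∈ ⋃ x ∈ leftT a b, leftT x c := Set.mem_biUnion hx hz
    rw [left_left_tree] at h
    simp only [Set.mem_iUnion, exists_prop] at h
    obtain ⟨y, hy, hz'⟩ := h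
    exact ⟨a, ha, y, ⟨b, hb, c, hc, hy⟩, hz'⟩
  · rintro ⟨a, ha, y, ⟨b, hb, c, hc, hy⟩, hz⟩
    have h : z ∈ ⋃ y ∈ addT b c, leftT a y := Set.mem_biUnion hy hz
    rw [← left_left_tree] at h
    simp only [Set.mem_iUnion, exists_prop] at h
    obtain ⟨x, hx, hz'⟩ := h
    exact ⟨x, ⟨a, ha, b, hb, hx⟩, c, hc, hz'⟩
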